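/- In the coalescence setting (G is the coalescence of H₁ and H₂ via the non-isolated vertex x), if x is a critical vertex of both H₁ and H₂, then G is critical if and only if both H₁ and H₂ are critical. -/
import Mathlib


open SimpleGraph Set

/-- `S` is a dominating set of the induced subgraph of `G` on the vertex set `A`:
`S ⊆ A` and every vertex of `A` is in the closed neighborhood of some vertex of `S`. -/
def IsDomOn {V : Type*} (G : SimpleGraph V) (A S : Set V) : Prop :=
  S ⊆ A ∧ ∀ v ∈ A, ∃ s ∈ S, s = v ∨ G.Adj s v

/-- The domination number of the induced subgraph of `G` on the vertex set `A`. -/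
noncomputable def domNumOn {V : Type*} (G : SimpleGraph V) (A : Set V) : ℕ :=
  sInf {n | ∃ S : Set V, IsDomOn G A S ∧ S.ncard = n}

/-- The domination number of `G`. -/
noncomputable def domNum {V : Type*} (G : SimpleGraph V) : ℕ :=
  domNumOn G Set.univ

/-- `y` is a critical vertex of the induced subgraph of `G` on `A`:
deleting `y` decreases the domination number. -/
def IsCritVertexOn {V : Type*} (G : SimpleGraph V) (A : Set V) (y : V) : Prop :=
  domNumOn G (A \ {y}) < domNumOn G A

/-- The induced subgraph of `G` on `A` is critical: all its vertices are critical. -/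
def CriticalOn {V : Type*} (G : SimpleGraph V) (A : Set V) : Prop :=
  ∀ y ∈ A, IsCritVertexOn G A y

/-- The induced subgraph of `G` on `A` is weak bicritical: no vertex deletion increases the
domination number (`V⁺ = ∅`), and deleting any vertex that keeps the domination number
unchanged (a vertex of `V⁰`) yields a critical graph. -/
def WeakBicriticalOn {V : Type*} (G : SimpleGraph V) (A : Set V) : Prop :=
  (∀ y ∈ A, domNumOn G (A \ {y}) ≤ domNumOn G A) ∧
  (∀ y ∈ A, domNumOn G (A \ {y}) = domNumOn G A → CriticalOn G (A \ {y}))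

lemma isDomOn_self' {V : Type*} (G : SimpleGraph V) (A : Set V) : IsDomOn G A A :=
  ⟨subset_rfl, fun v hv => ⟨v, hv, Or.inl rfl⟩⟩

lemma exists_domNumOn' {V : Type*} [Fintype V] (G : SimpleGraph V) (A : Set V) :
    ∃ S, IsDomOn G A S ∧ S.ncard = domNumOn G A :=
  Nat.sInf_mem (⟨A.ncard, A, isDomOn_self' G A, rfl⟩ :
    Set.Nonempty {n | ∃ S : Set V, IsDomOn G A S ∧ S.ncard = n})

lemma domNumOn_le' {V : Type*} (G : SimpleGraph V) {A S : Set V} (h : IsDomOn G A S) :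
    domNumOn G A ≤ S.ncard := Nat.sInf_le ⟨S, h, rfl⟩

/-- Upper bound: the domination number of a union is at most the sum. -/
lemma domNumOn_union_le' {V : Type*} [Fintype V] (G : SimpleGraph V) (A1 A2 : Set V) :
    domNumOn G (A1 ∪ A2) ≤ domNumOn G A1 + domNumOn G A2 := by
  obtain ⟨S1, h1, e1⟩ := exists_domNumOn' G A1
  obtain ⟨S2, h2, e2⟩ := exists_domNumOn' G A2
  have hdom : IsDomOn G (A1 ∪ A2) (S1 ∪ S2) := by
    refine ⟨union_subset_union h1.1 h2.1, ?_⟩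
    rintro v (hv | hv)
    · obtain ⟨s, hs, h⟩ := h1.2 v hv; exact ⟨s, Or.inl hs, h⟩
    · obtain ⟨s, hs, h⟩ := h2.2 v hv; exact ⟨s, Or.inr hs, h⟩
  calc domNumOn G (A1 ∪ A2) ≤ (S1 ∪ S2).ncard := domNumOn_le' G hdom
    _ ≤ S1.ncard + S2.ncard := Set.ncard_union_le _ _
    _ = _ := by rw [e1, e2]

/-- Lower bound for coalescence. -/
lemma coalescence_lb' {V : Type*} [Fintype V] (G : SimpleGraph V) (x : V) (V1 V2 : Set V)
    (hunion : V1 ∪ V2 = Set.univ) (hinter : V1 ∩ V2 = {x})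
    (hsep : ∀ a ∈ V1, ∀ b ∈ V2, a ≠ x → b ≠ x → ¬ G.Adj a b)
    (A : Set V) (hA : V2 ⊆ A) :
    domNumOn G (V1 ∩ A) + domNumOn G V2 ≤ domNumOn G A + 1 := by
  have hxI : x ∈ V1 ∩ V2 := by rw [hinter]; exact rfl
  have hxV1 : x ∈ V1 := hxI.1
  have hxV2 : x ∈ V2 := hxI.2
  have memU : ∀ v : V, v ∈ V1 ∨ v ∈ V2 := by
    intro v
    have : v ∈ V1 ∪ V2 := by rw [hunion]; trivial
    exact this
  have memI : ∀ v, v ∈ V1 → v ∈ V2 → v = x := by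
    intro v h1 h2
    have : v ∈ V1 ∩ V2 := ⟨h1, h2⟩
    rw [hinter] at this; exact this
  have side1 : ∀ s v, v ∈ V1 → v ≠ x → (s = v ∨ G.Adj s v) → s ∈ V1 := by
    intro s v hv hvx h
    rcases memU s with hs1 | hs2
    · exact hs1
    by_cases hsx : s = x
    · subst hsx; exact hxV1
    rcases h with rfl | hadj
    · exact absurd (memI s hv hs2) hsx
    · exact absurd hadj.symm (hsep v hv s hs2 hvx hsx)
  have side2 : ∀ s v, v ∈ V2 → v ≠ x → (s = v ∨ G.Adj s v) → s ∈ V2 := by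
    intro s v hv hvx h
    rcases memU s with hs1 | hs2
    · by_cases hsx : s = x
      · subst hsx; exact hxV2
      rcases h with rfl | hadj
      · exact absurd (memI s hs1 hv) hsx
      · exact absurd hadj (hsep s hs1 v hv hsx hvx)
    · exact hs2
  obtain ⟨S, hS, hcard⟩ := exists_domNumOn' G A
  have hSsub : S ⊆ A := hS.1
  have hSU : (S ∩ V1) ∪ (S ∩ V2) = S := by
    rw [← Set.inter_union_distrib_left, hunion, Set.inter_univ]
  have f1 : ∀ v ∈ V1 ∩ A, v ≠ x → ∃ s ∈ S ∩ V1, s = v ∨ G.Adj s v := by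
    rintro v ⟨hv1, hvA⟩ hvx
    obtain ⟨s, hs, h⟩ := hS.2 v hvA
    exact ⟨s, ⟨hs, side1 s v hv1 hvx h⟩, h⟩
  have f2 : ∀ v ∈ V2, v ≠ x → ∃ s ∈ S ∩ V2, s = v ∨ G.Adj s v := by
    intro v hv2 hvx
    obtain ⟨s, hs, h⟩ := hS.2 v (hA hv2)
    exact ⟨s, ⟨hs, side2 s v hv2 hvx h⟩, h⟩
  have hsub1 : S ∩ V1 ⊆ V1 ∩ A := fun s hs => ⟨hs.2, hSsub hs.1⟩
  have hsub2 : S ∩ V2 ⊆ V2 := fun s hs => hs.2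
  by_cases hxS : x ∈ S
  · -- x in S: both pieces dominate directly
    have d1 : IsDomOn G (V1 ∩ A) (S ∩ V1) := by
      refine ⟨hsub1, fun v hv => ?_⟩
      by_cases hvx : v = x
      · exact ⟨x, ⟨hxS, hxV1⟩, Or.inl hvx.symm⟩
      · exact f1 v hv hvx
    have d2 : IsDomOn G V2 (S ∩ V2) := by
      refine ⟨hsub2, fun v hv => ?_⟩
      by_cases hvx : v = x
      · exact ⟨x, ⟨hxS, hxV2⟩, Or.inl hvx.symm⟩
      · exact f2 v hv hvx
    have c1 := domNumOn_le' G d1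
    have c2 := domNumOn_le' G d2
    -- ncard (S∩V1) + ncard (S∩V2) ≤ ncard S + 1
    have hdisj : Disjoint (S ∩ V1) ((S ∩ V2) \ {x}) := by
      rw [Set.disjoint_left]
      rintro s ⟨hsS, hs1⟩ ⟨⟨_, hs2⟩, hsx⟩
      exact hsx (memI s hs1 hs2)
    have hcup : (S ∩ V1) ∪ ((S ∩ V2) \ {x}) = S := by
      ext s
      constructor
      · rintro (⟨hs, _⟩ | ⟨⟨hs, _⟩, _⟩) <;> exact hs
      · intro hs
        rcases memU s with h1 | h2
        · exact Or.inl ⟨hs, h1⟩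
        · by_cases hsx : s = x
          · exact Or.inl ⟨hs, hsx ▸ hxV1⟩
          · exact Or.inr ⟨⟨hs, h2⟩, hsx⟩
    have e1 : (S ∩ V1).ncard + ((S ∩ V2) \ {x}).ncard = S.ncard := by
      rw [← Set.ncard_union_eq hdisj (Set.toFinite _) (Set.toFinite _), hcup]
    have e2 : (S ∩ V2).ncard ≤ ((S ∩ V2) \ {x}).ncard + 1 := by
      have : S ∩ V2 ⊆ insert x ((S ∩ V2) \ {x}) := by
        intro s hs
        by_cases hsx : s = x
        · exact hsx ▸ Set.mem_insert _ _
        · exact Set.mem_insert_of_mem _ ⟨hs, hsx⟩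
      calc (S ∩ V2).ncard ≤ (insert x ((S ∩ V2) \ {x})).ncard :=
            Set.ncard_le_ncard this (Set.toFinite _)
        _ ≤ _ := Set.ncard_insert_le _ _
    omega
  · -- x not in S
    obtain ⟨s, hsS, hsx⟩ := hS.2 x (hA hxV2)
    have hdisj : Disjoint (S ∩ V1) (S ∩ V2) := by
      rw [Set.disjoint_left]
      rintro t ⟨htS, ht1⟩ ⟨_, ht2⟩
      exact hxS ((memI t ht1 ht2) ▸ htS)
    have ecard : (S ∩ V1).ncard + (S ∩ V2).ncard = S.ncard := by
      rw [← Set.ncard_union_eq hdisj (Set.toFinite _) (Set.toFinite _), hSU]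
    have hadj : G.Adj s x := by
      rcases hsx with rfl | h
      · exact absurd hsS hxS
      · exact h
    rcases memU s with hs1 | hs2
    · -- x dominated from the V1 side
      have d1 : IsDomOn G (V1 ∩ A) (S ∩ V1) := by
        refine ⟨hsub1, fun v hv => ?_⟩
        by_cases hvx : v = x
        · exact ⟨s, ⟨hsS, hs1⟩, Or.inr (hvx ▸ hadj)⟩
        · exact f1 v hv hvx
      have d2 : IsDomOn G V2 (insert x (S ∩ V2)) := by
        refine ⟨Set.insert_subset hxV2 hsub2, fun v hv => ?_⟩
        by_cases hvx : v = x
        · exact ⟨x, Set.mem_insert _ _, Or.inl hvx.symm⟩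
        · obtain ⟨t, ht, h⟩ := f2 v hv hvx
          exact ⟨t, Set.mem_insert_of_mem _ ht, h⟩
      have c1 := domNumOn_le' G d1
      have c2 := domNumOn_le' G d2
      have c3 : (insert x (S ∩ V2)).ncard ≤ (S ∩ V2).ncard + 1 := Set.ncard_insert_le _ _
      omega
    · -- x dominated from the V2 side
      have d2 : IsDomOn G V2 (S ∩ V2) := by
        refine ⟨hsub2, fun v hv => ?_⟩
        by_cases hvx : v = x
        · exact ⟨s, ⟨hsS, hs2⟩, Or.inr (hvx ▸ hadj)⟩
        · exact f2 v hv hvx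
      have d1 : IsDomOn G (V1 ∩ A) (insert x (S ∩ V1)) := by
        refine ⟨Set.insert_subset ⟨hxV1, hA hxV2⟩ hsub1, fun v hv => ?_⟩
        by_cases hvx : v = x
        · exact ⟨x, Set.mem_insert _ _, Or.inl hvx.symm⟩
        · obtain ⟨t, ht, h⟩ := f1 v hv hvx
          exact ⟨t, Set.mem_insert_of_mem _ ht, h⟩
      have c1 := domNumOn_le' G d1
      have c2 := domNumOn_le' G d2
      have c3 : (insert x (S ∩ V1)).ncard ≤ (S ∩ V1).ncard + 1 := Set.ncard_insert_le _ _
      omega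

/-- Coalescence: if x is a critical vertex of both H₁ and H₂, then G is critical iff
both H₁ and H₂ are critical. -/
theorem stmt_10 {V : Type*} [Fintype V] (G : SimpleGraph V) (x : V) (V1 V2 : Set V)
    (hunion : V1 ∪ V2 = Set.univ) (hinter : V1 ∩ V2 = {x})
    (hsep : ∀ a ∈ V1, ∀ b ∈ V2, a ≠ x → b ≠ x → ¬ G.Adj a b)
    (hx1 : ∃ a ∈ V1, G.Adj x a) (hx2 : ∃ b ∈ V2, G.Adj x b)
    (hcrit1 : IsCritVertexOn G V1 x) (hcrit2 : IsCritVertexOn G V2 x) :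
    CriticalOn G Set.univ ↔ CriticalOn G V1 ∧ CriticalOn G V2 := by
  clear hx1 hx2
  have hxI : x ∈ V1 ∩ V2 := by rw [hinter]; exact rfl
  have hxV1 : x ∈ V1 := hxI.1
  have hxV2 : x ∈ V2 := hxI.2
  have memU : ∀ v : V, v ∈ V1 ∨ v ∈ V2 := by
    intro v
    have : v ∈ V1 ∪ V2 := by rw [hunion]; trivial
    exact this
  have memI : ∀ v, v ∈ V1 → v ∈ V2 → v = x := by
    intro v h1 h2
    have : v ∈ V1 ∩ V2 := ⟨h1, h2⟩
    rw [hinter] at this; exact this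
  have hsep' : ∀ a ∈ V2, ∀ b ∈ V1, a ≠ x → b ≠ x → ¬ G.Adj a b :=
    fun a ha b hb hax hbx h => hsep b hb a ha hbx hax h.symm
  have hunion' : V2 ∪ V1 = Set.univ := by rw [Set.union_comm]; exact hunion
  have hinter' : V2 ∩ V1 = {x} := by rw [Set.inter_comm]; exact hinter
  -- Set identities
  have E3 : ∀ y ∈ V1, (V1 \ {y}) ∪ (V2 \ {x}) = Set.univ \ {y} := by
    intro y hy
    ext v
    simp only [Set.mem_union, Set.mem_diff, Set.mem_singleton_iff, Set.mem_univ, true_and]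
    constructor
    · rintro (⟨_, hvy⟩ | ⟨hv2, hvx⟩)
      · exact hvy
      · intro hvy
        exact hvx (memI v (hvy ▸ hy) hv2)
    · intro hvy
      rcases memU v with h1 | h2
      · exact Or.inl ⟨h1, hvy⟩
      · by_cases hvx : v = x
        · exact Or.inl ⟨hvx ▸ hxV1, hvy⟩
        · exact Or.inr ⟨h2, hvx⟩
  have E3' : ∀ y ∈ V2, (V2 \ {y}) ∪ (V1 \ {x}) = Set.univ \ {y} := by
    intro y hy
    ext v
    simp only [Set.mem_union, Set.mem_diff, Set.mem_singleton_iff, Set.mem_univ, true_and]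
    constructor
    · rintro (⟨_, hvy⟩ | ⟨hv1, hvx⟩)
      · exact hvy
      · intro hvy
        exact hvx (memI v hv1 (hvy ▸ hy))
    · intro hvy
      rcases memU v with h1 | h2
      · by_cases hvx : v = x
        · exact Or.inl ⟨hvx ▸ hxV2, hvy⟩
        · exact Or.inr ⟨h1, hvx⟩
      · exact Or.inl ⟨h2, hvy⟩
  have E1 : (V1 \ {x}) ∪ V2 = Set.univ := by
    ext v
    simp only [Set.mem_union, Set.mem_diff, Set.mem_singleton_iff, Set.mem_univ, iff_true]
    rcases memU v with h1 | h2
    · by_cases hvx : v = x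
      · exact Or.inr (hvx ▸ hxV2)
      · exact Or.inl ⟨h1, hvx⟩
    · exact Or.inr h2
  -- abbreviations
  set g1 := domNumOn G V1 with hg1
  set g2 := domNumOn G V2 with hg2
  -- global lower bound: g1 + g2 ≤ γ(G) + 1
  have L0 : g1 + g2 ≤ domNumOn G Set.univ + 1 := by
    have := coalescence_lb' G x V1 V2 hunion hinter hsep Set.univ (Set.subset_univ _)
    rwa [Set.inter_univ] at this
  -- upper bound: γ(G) ≤ γ(H1 - x) + g2
  have U0 : domNumOn G Set.univ ≤ domNumOn G (V1 \ {x}) + g2 := by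
    calc domNumOn G Set.univ = domNumOn G ((V1 \ {x}) ∪ V2) := by rw [E1]
      _ ≤ _ := domNumOn_union_le' G _ _
  -- for y ∈ V1 : upper bound for γ(G - y)
  have Uy : ∀ y ∈ V1, domNumOn G (Set.univ \ {y}) ≤
      domNumOn G (V1 \ {y}) + domNumOn G (V2 \ {x}) := by
    intro y hy
    calc domNumOn G (Set.univ \ {y}) = domNumOn G ((V1 \ {y}) ∪ (V2 \ {x})) := by rw [E3 y hy]
      _ ≤ _ := domNumOn_union_le' G _ _
  have Uy' : ∀ y ∈ V2, domNumOn G (Set.univ \ {y}) ≤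
      domNumOn G (V2 \ {y}) + domNumOn G (V1 \ {x}) := by
    intro y hy
    calc domNumOn G (Set.univ \ {y}) = domNumOn G ((V2 \ {y}) ∪ (V1 \ {x})) := by rw [E3' y hy]
      _ ≤ _ := domNumOn_union_le' G _ _
  -- for y ∈ V1 \ {x} : lower bound γ(H1 - y) + g2 ≤ γ(G - y) + 1
  have Ly : ∀ y, y ∉ V2 → domNumOn G (V1 \ {y}) + g2 ≤ domNumOn G (Set.univ \ {y}) + 1 := by
    intro y hy
    have hsub : V2 ⊆ Set.univ \ {y} := fun v hv => ⟨trivial, fun h => hy (h ▸ hv)⟩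
    have := coalescence_lb' G x V1 V2 hunion hinter hsep (Set.univ \ {y}) hsub
    have heq : V1 ∩ (Set.univ \ {y}) = V1 \ {y} := by
      rw [Set.diff_eq, Set.diff_eq, Set.univ_inter]
    rwa [heq] at this
  have Ly' : ∀ y, y ∉ V1 → domNumOn G (V2 \ {y}) + g1 ≤ domNumOn G (Set.univ \ {y}) + 1 := by
    intro y hy
    have hsub : V1 ⊆ Set.univ \ {y} := fun v hv => ⟨trivial, fun h => hy (h ▸ hv)⟩
    have := coalescence_lb' G x V2 V1 hunion' hinter' hsep' (Set.univ \ {y}) hsub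
    have heq : V2 ∩ (Set.univ \ {y}) = V2 \ {y} := by
      rw [Set.diff_eq, Set.diff_eq, Set.univ_inter]
    rwa [heq] at this
  have hc1 : domNumOn G (V1 \ {x}) < g1 := hcrit1
  have hc2 : domNumOn G (V2 \ {x}) < g2 := hcrit2
  constructor
  · intro hG
    constructor
    · intro y hy
      by_cases hyx : y = x
      · exact hyx ▸ hcrit1
      · have hy2 : y ∉ V2 := fun h => hyx (memI y hy h)
        have h1 := hG y trivial
        have h2 := Ly y hy2
        have h3 := U0
        show domNumOn G (V1 \ {y}) < g1
        have h4 : domNumOn G (Set.univ \ {y}) < domNumOn G Set.univ := h1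
        omega
    · intro y hy
      by_cases hyx : y = x
      · exact hyx ▸ hcrit2
      · have hy1 : y ∉ V1 := fun h => hyx (memI y h hy)
        have h1 : domNumOn G (Set.univ \ {y}) < domNumOn G Set.univ := hG y trivial
        have h2 := Ly' y hy1
        -- need an upper bound γ(G) ≤ g1 + γ(H2 - x)
        have E1' : (V2 \ {x}) ∪ V1 = Set.univ := by
          ext v
          simp only [Set.mem_union, Set.mem_diff, Set.mem_singleton_iff, Set.mem_univ, iff_true]
          rcases memU v with hh1 | hh2
          · exact Or.inr hh1
          · by_cases hvx : v = x
            · exact Or.inr (hvx ▸ hxV1)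
            · exact Or.inl ⟨hh2, hvx⟩
        have h3 : domNumOn G Set.univ ≤ domNumOn G (V2 \ {x}) + g1 := by
          calc domNumOn G Set.univ = domNumOn G ((V2 \ {x}) ∪ V1) := by rw [E1']
            _ ≤ _ := domNumOn_union_le' G _ _
        show domNumOn G (V2 \ {y}) < g2
        omega
  · rintro ⟨h1, h2⟩ y _
    show domNumOn G (Set.univ \ {y}) < domNumOn G Set.univ
    rcases memU y with hy1 | hy2
    · have ha := Uy y hy1
      have hb : domNumOn G (V1 \ {y}) < g1 := h1 y hy1
      omega
    · have ha := Uy' y hy2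
      have hb : domNumOn G (V2 \ {y}) < g2 := h2 y hy2
      omega
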